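/- arXiv:1704.02365 — 5 statements merged into one kernel-verified Lean document; each statement's English description precedes it below -/
import Mathlib

section
/- (Supermodularity of the hitting-time objective) Let G = (V,E) be a finite connected simple graph and consider the simple random walk on G. For all nonempty subsets A ⊆ B ⊆ V and every j ∈ V, the function F satisfies F(A) − F(A ∪ {j}) ≥ F(B) − F(B ∪ {j}). -/
open Finset

/-- `avoidProb G A l i` is the probability that the simple random walk on `G` started at `i`
stays outside `A` for each of its first `l` steps. -/
noncomputable def avoidProb {V : Type*} (G : SimpleGraph V) [Fintype V] [DecidableEq V]
    [DecidableRel G.Adj] (A : Finset V) : ℕ → V → ℝ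
  | 0, _ => 1
  | l + 1, i =>
      ∑ j ∈ univ.filter (fun j => G.Adj i j ∧ j ∉ A),
        (G.degree i : ℝ)⁻¹ * avoidProb G A l j

section
variable {V : Type*} (G : SimpleGraph V) [Fintype V] [DecidableEq V] [DecidableRel G.Adj]

lemma avoid_nonneg (A : Finset V) : ∀ (l : ℕ) (i : V), 0 ≤ avoidProb G A l i := by
  intro l
  induction l with
  | zero => intro i; simp [avoidProb]
  | succ l ih =>
    intro i
    rw [avoidProb]
    exact Finset.sum_nonneg fun k _ => mul_nonneg (by positivity) (ih k)

lemma filter_subset_nbr (A : Finset V) (i : V) :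
    univ.filter (fun k => G.Adj i k ∧ k ∉ A) ⊆ G.neighborFinset i := by
  intro k hk
  simp only [mem_filter, mem_univ, true_and] at hk
  exact (G.mem_neighborFinset i k).2 hk.1

lemma sum_inv_deg_le_one (A : Finset V) (i : V) :
    ∑ k ∈ univ.filter (fun k => G.Adj i k ∧ k ∉ A), (G.degree i : ℝ)⁻¹ ≤ 1 := by
  calc ∑ k ∈ univ.filter (fun k => G.Adj i k ∧ k ∉ A), (G.degree i : ℝ)⁻¹
      ≤ ∑ k ∈ G.neighborFinset i, (G.degree i : ℝ)⁻¹ :=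
        Finset.sum_le_sum_of_subset_of_nonneg (filter_subset_nbr G A i)
          (fun _ _ _ => by positivity)
    _ = (G.degree i : ℝ) * (G.degree i : ℝ)⁻¹ := by
        rw [Finset.sum_const, G.card_neighborFinset_eq_degree, nsmul_eq_mul]
    _ ≤ 1 := by
        rcases eq_or_ne (G.degree i) 0 with h | h
        · simp [h]
        · rw [mul_inv_cancel₀ (by exact_mod_cast h)]

lemma avoid_succ_le (A : Finset V) : ∀ (l : ℕ) (i : V),
    avoidProb G A (l+1) i ≤ avoidProb G A l i := by
  intro l
  induction l with
  | zero =>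
    intro i
    rw [avoidProb]
    calc ∑ k ∈ univ.filter (fun k => G.Adj i k ∧ k ∉ A), (G.degree i : ℝ)⁻¹ * avoidProb G A 0 k
        = ∑ k ∈ univ.filter (fun k => G.Adj i k ∧ k ∉ A), (G.degree i : ℝ)⁻¹ := by
          apply Finset.sum_congr rfl; intro k _; simp [avoidProb]
      _ ≤ 1 := sum_inv_deg_le_one G A i
      _ = avoidProb G A 0 i := by simp [avoidProb]
  | succ l ih =>
    intro i
    rw [avoidProb, show avoidProb G A (l+1) i = ∑ k ∈ univ.filter (fun k => G.Adj i k ∧ k ∉ A),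
        (G.degree i : ℝ)⁻¹ * avoidProb G A l k from rfl]
    exact Finset.sum_le_sum fun k _ =>
      mul_le_mul_of_nonneg_left (ih k) (by positivity)

lemma avoid_anti (A : Finset V) {l m : ℕ} (h : l ≤ m) (i : V) :
    avoidProb G A m i ≤ avoidProb G A l i :=
  antitone_nat_of_succ_le (f := fun n => avoidProb G A n i) (fun n => avoid_succ_le G A n i) h

lemma avoid_le_one (A : Finset V) (l : ℕ) (i : V) : avoidProb G A l i ≤ 1 := by
  have := avoid_anti G A (Nat.zero_le l) i
  simpa [avoidProb] using this

lemma avoid_mono {A B : Finset V} (hAB : A ⊆ B) : ∀ (l : ℕ) (i : V),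
    avoidProb G B l i ≤ avoidProb G A l i := by
  intro l
  induction l with
  | zero => intro i; simp [avoidProb]
  | succ l ih =>
    intro i
    rw [avoidProb, avoidProb]
    calc ∑ k ∈ univ.filter (fun k => G.Adj i k ∧ k ∉ B), (G.degree i : ℝ)⁻¹ * avoidProb G B l k
        ≤ ∑ k ∈ univ.filter (fun k => G.Adj i k ∧ k ∉ B), (G.degree i : ℝ)⁻¹ * avoidProb G A l k :=
          Finset.sum_le_sum fun k _ => mul_le_mul_of_nonneg_left (ih k) (by positivity)
      _ ≤ ∑ k ∈ univ.filter (fun k => G.Adj i k ∧ k ∉ A), (G.degree i : ℝ)⁻¹ * avoidProb G A l k := by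
          apply Finset.sum_le_sum_of_subset_of_nonneg
          · intro k hk
            simp only [mem_filter, mem_univ, true_and] at hk ⊢
            exact ⟨hk.1, fun h => hk.2 (hAB h)⟩
          · intro k _ _
            exact mul_nonneg (by positivity) (avoid_nonneg G A l k)

end

section
variable {V : Type*} (G : SimpleGraph V) [Fintype V] [DecidableEq V] [DecidableRel G.Adj]

lemma filter_insert_subset (A : Finset V) (j i : V) :
    univ.filter (fun k => G.Adj i k ∧ k ∉ insert j A) ⊆
      univ.filter (fun k => G.Adj i k ∧ k ∉ A) := by
  intro k hk
  simp only [mem_filter, mem_univ, true_and, mem_insert] at hk ⊢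
  exact ⟨hk.1, fun h => hk.2 (Or.inr h)⟩

lemma avoid_succ_split (A : Finset V) (j : V) (l : ℕ) (i : V) :
    avoidProb G A (l+1) i =
      (∑ k ∈ univ.filter (fun k => G.Adj i k ∧ k ∉ insert j A),
        (G.degree i : ℝ)⁻¹ * avoidProb G A l k) +
      ∑ k ∈ univ.filter (fun k => G.Adj i k ∧ k ∉ A) \
            univ.filter (fun k => G.Adj i k ∧ k ∉ insert j A),
        (G.degree i : ℝ)⁻¹ * avoidProb G A l k := by
  rw [avoidProb, ← Finset.sum_sdiff (filter_insert_subset G A j i), add_comm]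

lemma avoid_diff {A B : Finset V} (hAB : A ⊆ B) (j : V) : ∀ (l : ℕ) (i : V),
    avoidProb G B l i - avoidProb G (insert j B) l i ≤
      avoidProb G A l i - avoidProb G (insert j A) l i := by
  intro l
  induction l with
  | zero => intro i; simp [avoidProb]
  | succ l ih =>
    intro i
    have hins : ∀ (C : Finset V), avoidProb G (insert j C) (l+1) i =
        ∑ k ∈ univ.filter (fun k => G.Adj i k ∧ k ∉ insert j C),
          (G.degree i : ℝ)⁻¹ * avoidProb G (insert j C) l k := fun C => by rw [avoidProb]
    rw [avoid_succ_split G A j l i, avoid_succ_split G B j l i, hins, hins]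
    rw [add_sub_right_comm, add_sub_right_comm, ← Finset.sum_sub_distrib,
        ← Finset.sum_sub_distrib]
    simp only [← mul_sub]
    apply add_le_add
    · calc ∑ k ∈ univ.filter (fun k => G.Adj i k ∧ k ∉ insert j B),
            (G.degree i : ℝ)⁻¹ * (avoidProb G B l k - avoidProb G (insert j B) l k)
          ≤ ∑ k ∈ univ.filter (fun k => G.Adj i k ∧ k ∉ insert j B),
            (G.degree i : ℝ)⁻¹ * (avoidProb G A l k - avoidProb G (insert j A) l k) :=
            Finset.sum_le_sum fun k _ => mul_le_mul_of_nonneg_left (ih k) (by positivity)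
        _ ≤ ∑ k ∈ univ.filter (fun k => G.Adj i k ∧ k ∉ insert j A),
            (G.degree i : ℝ)⁻¹ * (avoidProb G A l k - avoidProb G (insert j A) l k) := by
            apply Finset.sum_le_sum_of_subset_of_nonneg
            · intro k hk
              simp only [mem_filter, mem_univ, true_and, mem_insert] at hk ⊢
              exact ⟨hk.1, fun h => hk.2 (h.imp id (fun h' => hAB h'))⟩
            · intro k _ _
              exact mul_nonneg (by positivity)
                (sub_nonneg.2 (avoid_mono G (Finset.subset_insert j A) l k))
    · calc ∑ k ∈ univ.filter (fun k => G.Adj i k ∧ k ∉ B) \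
              univ.filter (fun k => G.Adj i k ∧ k ∉ insert j B),
            (G.degree i : ℝ)⁻¹ * avoidProb G B l k
          ≤ ∑ k ∈ univ.filter (fun k => G.Adj i k ∧ k ∉ B) \
              univ.filter (fun k => G.Adj i k ∧ k ∉ insert j B),
            (G.degree i : ℝ)⁻¹ * avoidProb G A l k :=
            Finset.sum_le_sum fun k _ =>
              mul_le_mul_of_nonneg_left (avoid_mono G hAB l k) (by positivity)
        _ ≤ ∑ k ∈ univ.filter (fun k => G.Adj i k ∧ k ∉ A) \
              univ.filter (fun k => G.Adj i k ∧ k ∉ insert j A),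
            (G.degree i : ℝ)⁻¹ * avoidProb G A l k := by
            apply Finset.sum_le_sum_of_subset_of_nonneg
            · intro k hk
              simp only [mem_sdiff, mem_filter, mem_univ, true_and, mem_insert,
                not_and, not_not] at hk ⊢
              obtain ⟨⟨hadj, hkB⟩, h2⟩ := hk
              have hkj : k = j := by
                rcases h2 hadj with h | h
                · exact h
                · exact absurd h hkB
              exact ⟨⟨hadj, fun h => hkB (hAB h)⟩, fun _ => Or.inl hkj⟩
            · intro k _ _
              exact mul_nonneg (by positivity) (avoid_nonneg G A l k)

end

noncomputable def pEnd {V : Type*} (G : SimpleGraph V) [Fintype V] [DecidableEq V]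
    [DecidableRel G.Adj] (A : Finset V) : ℕ → V → V → ℝ
  | 0, i, k => if i = k then 1 else 0
  | l + 1, i, k =>
      ∑ m ∈ univ.filter (fun m => G.Adj i m ∧ m ∉ A),
        (G.degree i : ℝ)⁻¹ * pEnd G A l m k

section
variable {V : Type*} (G : SimpleGraph V) [Fintype V] [DecidableEq V] [DecidableRel G.Adj]

lemma pEnd_nonneg (A : Finset V) : ∀ (l : ℕ) (i k : V), 0 ≤ pEnd G A l i k := by
  intro l
  induction l with
  | zero => intro i k; rw [pEnd]; positivity
  | succ l ih =>
    intro i k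
    rw [pEnd]
    exact Finset.sum_nonneg fun m _ => mul_nonneg (by positivity) (ih m k)

lemma pEnd_eq_zero (A : Finset V) {k : V} (hk : k ∈ A) : ∀ (l : ℕ) (i : V),
    pEnd G A (l+1) i k = 0 := by
  intro l
  induction l with
  | zero =>
    intro i
    rw [pEnd]
    apply Finset.sum_eq_zero
    intro m hm
    simp only [mem_filter, mem_univ, true_and] at hm
    have hmk : m ≠ k := fun h => hm.2 (h ▸ hk)
    rw [pEnd, if_neg hmk, mul_zero]
  | succ l ih =>
    intro i
    rw [pEnd]
    apply Finset.sum_eq_zero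
    intro m _
    rw [ih m, mul_zero]

lemma avoid_decomp (A : Finset V) : ∀ (l m : ℕ) (i : V),
    avoidProb G A (l + m) i = ∑ k, pEnd G A l i k * avoidProb G A m k := by
  intro l
  induction l with
  | zero =>
    intro m i
    simp [pEnd, ite_mul, Finset.sum_ite_eq, Nat.zero_add]
  | succ l ih =>
    intro m i
    have : l + 1 + m = (l + m) + 1 := by omega
    rw [this, avoidProb]
    calc ∑ m' ∈ univ.filter (fun m' => G.Adj i m' ∧ m' ∉ A),
          (G.degree i : ℝ)⁻¹ * avoidProb G A (l + m) m'
        = ∑ m' ∈ univ.filter (fun m' => G.Adj i m' ∧ m' ∉ A),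
          ∑ k, (G.degree i : ℝ)⁻¹ * pEnd G A l m' k * avoidProb G A m k := by
          apply Finset.sum_congr rfl; intro m' _
          rw [ih m m', Finset.mul_sum]
          simp [mul_assoc]
      _ = ∑ k, (∑ m' ∈ univ.filter (fun m' => G.Adj i m' ∧ m' ∉ A),
            (G.degree i : ℝ)⁻¹ * pEnd G A l m' k) * avoidProb G A m k := by
          rw [Finset.sum_comm]
          apply Finset.sum_congr rfl; intro k _
          rw [Finset.sum_mul]
      _ = ∑ k, pEnd G A (l + 1) i k * avoidProb G A m k := by
          apply Finset.sum_congr rfl; intro k _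
          rw [pEnd]

lemma sum_pEnd (A : Finset V) (l : ℕ) (i : V) :
    ∑ k, pEnd G A l i k = avoidProb G A l i := by
  have := avoid_decomp G A l 0 i
  simp only [Nat.add_zero] at this
  rw [this]
  apply Finset.sum_congr rfl
  intro k _
  simp [avoidProb]

lemma avoid_geom (A : Finset V) {N : ℕ} (hN : 1 ≤ N) {ρ : ℝ} (hρ0 : 0 ≤ ρ)
    (hub : ∀ k ∉ A, avoidProb G A N k ≤ ρ) :
    ∀ (m : ℕ) (k : V), k ∉ A → avoidProb G A (m * N) k ≤ ρ ^ m := by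
  intro m
  induction m with
  | zero => intro k _; simp [avoidProb]
  | succ m ih =>
    intro k hk
    have hmul : (m + 1) * N = N + m * N := by ring
    rw [hmul, avoid_decomp G A N (m * N) k]
    calc ∑ k', pEnd G A N k k' * avoidProb G A (m * N) k'
        ≤ ∑ k', pEnd G A N k k' * ρ ^ m := by
          apply Finset.sum_le_sum
          intro k' _
          by_cases hk' : k' ∈ A
          · obtain ⟨N', rfl⟩ := Nat.exists_eq_add_of_le hN
            rw [show 1 + N' = N' + 1 by ring, pEnd_eq_zero G A hk', zero_mul, zero_mul]
          · exact mul_le_mul_of_nonneg_left (ih k' hk') (pEnd_nonneg G A N k k')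
      _ = avoidProb G A N k * ρ ^ m := by rw [← Finset.sum_mul, sum_pEnd]
      _ ≤ ρ * ρ ^ m := mul_le_mul_of_nonneg_right (hub k hk) (by positivity)
      _ = ρ ^ (m + 1) := by ring

end

section
variable {V : Type*} (G : SimpleGraph V) [Fintype V] [DecidableEq V] [DecidableRel G.Adj]

lemma sum_erase_bound (A : Finset V) (l : ℕ) {k m : V} (hadj : G.Adj k m) {S : Finset V}
    (hS : S ⊆ (G.neighborFinset k).erase m) :
    ∑ k' ∈ S, (G.degree k : ℝ)⁻¹ * avoidProb G A l k' ≤ 1 - (G.degree k : ℝ)⁻¹ := by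
  have hd : 0 < G.degree k := G.degree_pos_iff_exists_adj k |>.2 ⟨m, hadj⟩
  have hd' : (0:ℝ) < (G.degree k : ℝ) := by exact_mod_cast hd
  calc ∑ k' ∈ S, (G.degree k : ℝ)⁻¹ * avoidProb G A l k'
      ≤ ∑ k' ∈ S, (G.degree k : ℝ)⁻¹ := by
        apply Finset.sum_le_sum
        intro k' _
        calc (G.degree k : ℝ)⁻¹ * avoidProb G A l k'
            ≤ (G.degree k : ℝ)⁻¹ * 1 :=
              mul_le_mul_of_nonneg_left (avoid_le_one G A l k') (by positivity)
          _ = (G.degree k : ℝ)⁻¹ := mul_one _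
    _ ≤ ∑ k' ∈ (G.neighborFinset k).erase m, (G.degree k : ℝ)⁻¹ :=
        Finset.sum_le_sum_of_subset_of_nonneg hS (fun _ _ _ => by positivity)
    _ = ((G.degree k - 1 : ℕ) : ℝ) * (G.degree k : ℝ)⁻¹ := by
        rw [Finset.sum_const, Finset.card_erase_of_mem
          ((G.mem_neighborFinset k m).2 hadj), G.card_neighborFinset_eq_degree, nsmul_eq_mul]
    _ = ((G.degree k : ℝ) - 1) * (G.degree k : ℝ)⁻¹ := by
        rw [Nat.cast_sub hd]; norm_num
    _ = 1 - (G.degree k : ℝ)⁻¹ := by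
        field_simp

lemma avoid_lt_one_of_adj_mem (A : Finset V) (l : ℕ) {k m : V} (hadj : G.Adj k m)
    (hm : m ∈ A) : avoidProb G A (l+1) k < 1 := by
  have hd : 0 < G.degree k := G.degree_pos_iff_exists_adj k |>.2 ⟨m, hadj⟩
  have hd' : (0:ℝ) < (G.degree k : ℝ) := by exact_mod_cast hd
  rw [avoidProb]
  have hsub : univ.filter (fun k' => G.Adj k k' ∧ k' ∉ A) ⊆ (G.neighborFinset k).erase m := by
    intro k' hk'
    simp only [mem_filter, mem_univ, true_and] at hk'
    rw [Finset.mem_erase, SimpleGraph.mem_neighborFinset]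
    exact ⟨fun h => hk'.2 (h ▸ hm), hk'.1⟩
  calc ∑ k' ∈ univ.filter (fun k' => G.Adj k k' ∧ k' ∉ A),
        (G.degree k : ℝ)⁻¹ * avoidProb G A l k'
      ≤ 1 - (G.degree k : ℝ)⁻¹ := sum_erase_bound G A l hadj hsub
    _ < 1 := by
        have : (0:ℝ) < (G.degree k : ℝ)⁻¹ := by positivity
        linarith

lemma avoid_lt_one_of_adj_lt (A : Finset V) (l : ℕ) {k m : V} (hadj : G.Adj k m)
    (hm : m ∉ A) (hq : avoidProb G A l m < 1) : avoidProb G A (l+1) k < 1 := by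
  have hd : 0 < G.degree k := G.degree_pos_iff_exists_adj k |>.2 ⟨m, hadj⟩
  have hd' : (0:ℝ) < (G.degree k : ℝ) := by exact_mod_cast hd
  have hdinv : (0:ℝ) < (G.degree k : ℝ)⁻¹ := by positivity
  rw [avoidProb]
  have hmF : m ∈ univ.filter (fun k' => G.Adj k k' ∧ k' ∉ A) := by
    simp only [mem_filter, mem_univ, true_and]
    exact ⟨hadj, hm⟩
  rw [← Finset.add_sum_erase _ _ hmF]
  have hsub : (univ.filter (fun k' => G.Adj k k' ∧ k' ∉ A)).erase m ⊆
      (G.neighborFinset k).erase m :=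
    Finset.erase_subset_erase m (filter_subset_nbr G A k)
  have h1 : (G.degree k : ℝ)⁻¹ * avoidProb G A l m < (G.degree k : ℝ)⁻¹ * 1 :=
    mul_lt_mul_of_pos_left hq hdinv
  have h2 := sum_erase_bound G A l hadj hsub
  calc (G.degree k : ℝ)⁻¹ * avoidProb G A l m +
        ∑ k' ∈ (univ.filter (fun k' => G.Adj k k' ∧ k' ∉ A)).erase m,
          (G.degree k : ℝ)⁻¹ * avoidProb G A l k'
      < (G.degree k : ℝ)⁻¹ * 1 + (1 - (G.degree k : ℝ)⁻¹) := add_lt_add_of_lt_of_le h1 h2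
    _ = 1 := by ring

lemma avoid_lt_one_aux (A : Finset V) : ∀ (n : ℕ) (k a : V), k ∉ A → a ∈ A →
    ∀ (w : G.Walk k a), w.length ≤ n + 1 → avoidProb G A (n+1) k < 1 := by
  intro n
  induction n with
  | zero =>
    intro k a hk ha w hw
    cases w with
    | nil => exact absurd ha hk
    | cons hadj w' =>
      rename_i m
      simp only [SimpleGraph.Walk.length_cons] at hw
      have hl0 : w'.length = 0 := by omega
      have hm : m = a := SimpleGraph.Walk.eq_of_length_eq_zero hl0
      exact avoid_lt_one_of_adj_mem G A 0 hadj (hm ▸ ha)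
  | succ n ih =>
    intro k a hk ha w hw
    cases w with
    | nil => exact absurd ha hk
    | cons hadj w' =>
      rename_i m
      simp only [SimpleGraph.Walk.length_cons] at hw
      by_cases hm : m ∈ A
      · exact avoid_lt_one_of_adj_mem G A (n+1) hadj hm
      · exact avoid_lt_one_of_adj_lt G A (n+1) hadj hm
          (ih m a hm ha w' (by omega))

lemma avoid_lt_one (hG : G.Connected) {A : Finset V} (hA : A.Nonempty) {k : V}
    (hk : k ∉ A) : avoidProb G A (Fintype.card V) k < 1 := by
  obtain ⟨a, ha⟩ := hA
  have hr : G.Reachable k a := hG.preconnected k a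
  have w0 := hr.some
  set p := w0.bypass with hp_def
  have hp : p.IsPath := w0.bypass_isPath
  have hlen : p.length < Fintype.card V := hp.length_lt
  have hka : k ≠ a := fun h => hk (h ▸ ha)
  have hpos : p.length ≠ 0 := fun h =>
    hka (SimpleGraph.Walk.eq_of_length_eq_zero h)
  obtain ⟨n, hn⟩ := Nat.exists_eq_succ_of_ne_zero hpos
  have h1 : avoidProb G A (n+1) k < 1 :=
    avoid_lt_one_aux G A n k a hk ha p (le_of_eq hn)
  have h2 : avoidProb G A (Fintype.card V) k ≤ avoidProb G A (n+1) k :=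
    avoid_anti G A (by omega) k
  exact lt_of_le_of_lt h2 h1

lemma avoid_summable (hG : G.Connected) {A : Finset V} (hA : A.Nonempty) {i : V}
    (hi : i ∉ A) : Summable (fun l => avoidProb G A l i) := by
  have hVne : Nonempty V := ⟨hA.choose⟩
  set N := Fintype.card V with hN_def
  have hN : 1 ≤ N := Fintype.card_pos
  have hAc : Aᶜ.Nonempty := ⟨i, Finset.mem_compl.2 hi⟩
  set ρ : ℝ := Aᶜ.sup' hAc (fun k => avoidProb G A N k) with hρ_def
  have hρ0 : 0 ≤ ρ := le_trans (avoid_nonneg G A N i)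
    (Finset.le_sup' _ (Finset.mem_compl.2 hi))
  have hρ1 : ρ < 1 := by
    rw [hρ_def, Finset.sup'_lt_iff]
    intro k hk
    exact avoid_lt_one G hG hA (Finset.mem_compl.1 hk)
  have hub : ∀ k ∉ A, avoidProb G A N k ≤ ρ :=
    fun k hk => Finset.le_sup' _ (Finset.mem_compl.2 hk)
  have hgeom := avoid_geom G A hN hρ0 hub
  have hpart : ∀ m : ℕ, ∑ l ∈ Finset.range (m * N), avoidProb G A l i ≤
      N * ∑ m' ∈ Finset.range m, ρ ^ m' := by
    intro m
    induction m with
    | zero => simp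
    | succ m ih =>
      rw [Nat.succ_mul, Finset.sum_range_add, Finset.sum_range_succ, mul_add]
      apply add_le_add ih
      calc ∑ x ∈ Finset.range N, avoidProb G A (m * N + x) i
          ≤ ∑ x ∈ Finset.range N, ρ ^ m := by
            apply Finset.sum_le_sum
            intro x _
            exact le_trans (avoid_anti G A (Nat.le_add_right _ _) i) (hgeom m i hi)
        _ = N * ρ ^ m := by rw [Finset.sum_const, Finset.card_range, nsmul_eq_mul]
  apply summable_of_sum_range_le (c := N * (1 - ρ)⁻¹) (fun l => avoid_nonneg G A l i)
  intro n
  calc ∑ l ∈ Finset.range n, avoidProb G A l i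
      ≤ ∑ l ∈ Finset.range (n * N), avoidProb G A l i := by
        apply Finset.sum_le_sum_of_subset_of_nonneg
        · exact Finset.range_subset_range.2 (Nat.le_mul_of_pos_right n (by omega))
        · exact fun l _ _ => avoid_nonneg G A l i
    _ ≤ N * ∑ m' ∈ Finset.range n, ρ ^ m' := hpart n
    _ ≤ N * (1 - ρ)⁻¹ := by
        apply mul_le_mul_of_nonneg_left _ (by positivity)
        rw [← tsum_geometric_of_lt_one hρ0 hρ1]
        exact Summable.sum_le_tsum _ (fun l _ => by positivity) (summable_geometric_of_lt_one hρ0 hρ1)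

end


/-- `expHit G A i = h(i,A)`, the expected first hitting time of `A` by the simple random walk
on `G` started at `i`, expressed as `h(i,A) = Σ_{l ≥ 0} Prob_i(T_A > l)`. -/
noncomputable def expHit {V : Type*} (G : SimpleGraph V) [Fintype V] [DecidableEq V]
    [DecidableRel G.Adj] (A : Finset V) (i : V) : ℝ :=
  ∑' l : ℕ, avoidProb G A l i

/-- `Fobj G A = F(A) = Σ_{i ∉ A} h(i,A)`. -/
noncomputable def Fobj {V : Type*} (G : SimpleGraph V) [Fintype V] [DecidableEq V]
    [DecidableRel G.Adj] (A : Finset V) : ℝ :=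
  ∑ i ∈ Aᶜ, expHit G A i

/-- Supermodularity of the hitting-time objective: For the simple random walk on
a finite connected simple graph `G`, for all nonempty subsets `A ⊆ B ⊆ V` and every `j ∈ V`,
`F(A) - F(A ∪ {j}) ≥ F(B) - F(B ∪ {j})`. -/
theorem stmt5 {V : Type*} (G : SimpleGraph V) [Fintype V] [DecidableEq V] [DecidableRel G.Adj]
    (hG : G.Connected) (A B : Finset V) (hA : A.Nonempty) (hAB : A ⊆ B) (j : V) :
    Fobj G B - Fobj G (insert j B) ≤ Fobj G A - Fobj G (insert j A) := by
  have hB : B.Nonempty := hA.mono hAB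
  by_cases hjA : j ∈ A
  · rw [Finset.insert_eq_self.2 hjA, Finset.insert_eq_self.2 (hAB hjA)]
    simp
  -- j ∉ A
  have hnonneg : ∀ (C : Finset V) (i : V), 0 ≤ expHit G C i :=
    fun C i => tsum_nonneg (fun l => avoid_nonneg G C l i)
  have hsummable : ∀ {C : Finset V}, C.Nonempty → ∀ {i : V}, i ∉ C →
      Summable (fun l => avoidProb G C l i) := fun {C} hC {i} hi => avoid_summable G hG hC hi
  have hmono : ∀ {C D : Finset V}, C.Nonempty → C ⊆ D → ∀ i ∉ D, expHit G D i ≤ expHit G C i := by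
    intro C D hC hCD i hi
    exact Summable.tsum_le_tsum (fun l => avoid_mono G hCD l i)
      (hsummable (hC.mono hCD) hi) (hsummable hC (fun h => hi (hCD h)))
  have hjAc : j ∈ Aᶜ := Finset.mem_compl.2 hjA
  have hFA : Fobj G A = expHit G A j + ∑ i ∈ Aᶜ.erase j, expHit G A i :=
    (Finset.add_sum_erase _ _ hjAc).symm
  have hFA' : Fobj G (insert j A) = ∑ i ∈ Aᶜ.erase j, expHit G (insert j A) i := by
    rw [Fobj, Finset.compl_insert]
  have hmemA : ∀ i ∈ Aᶜ.erase j, i ∉ insert j A := by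
    intro i hi
    rw [Finset.mem_erase, Finset.mem_compl] at hi
    rw [Finset.mem_insert]
    exact fun h => h.elim hi.1 hi.2
  by_cases hjB : j ∈ B
  · rw [Finset.insert_eq_self.2 hjB, sub_self]
    rw [sub_nonneg, hFA, hFA']
    calc ∑ i ∈ Aᶜ.erase j, expHit G (insert j A) i
        ≤ ∑ i ∈ Aᶜ.erase j, expHit G A i :=
          Finset.sum_le_sum fun i hi =>
            hmono hA (Finset.subset_insert j A) i (hmemA i hi)
      _ ≤ expHit G A j + ∑ i ∈ Aᶜ.erase j, expHit G A i := by
          have := hnonneg A j; linarith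
  -- j ∉ B
  have hjBc : j ∈ Bᶜ := Finset.mem_compl.2 hjB
  have hFB : Fobj G B = expHit G B j + ∑ i ∈ Bᶜ.erase j, expHit G B i :=
    (Finset.add_sum_erase _ _ hjBc).symm
  have hFB' : Fobj G (insert j B) = ∑ i ∈ Bᶜ.erase j, expHit G (insert j B) i := by
    rw [Fobj, Finset.compl_insert]
  have hmemB : ∀ i ∈ Bᶜ.erase j, i ∉ insert j B := by
    intro i hi
    rw [Finset.mem_erase, Finset.mem_compl] at hi
    rw [Finset.mem_insert]
    exact fun h => h.elim hi.1 hi.2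
  have hsubBA : Bᶜ.erase j ⊆ Aᶜ.erase j := by
    intro i hi
    rw [Finset.mem_erase, Finset.mem_compl] at hi ⊢
    exact ⟨hi.1, fun h => hi.2 (hAB h)⟩
  have hj_le : expHit G B j ≤ expHit G A j := hmono hA hAB j hjB
  have hsum_le : ∑ i ∈ Bᶜ.erase j, (expHit G B i - expHit G (insert j B) i) ≤
      ∑ i ∈ Aᶜ.erase j, (expHit G A i - expHit G (insert j A) i) := by
    calc ∑ i ∈ Bᶜ.erase j, (expHit G B i - expHit G (insert j B) i)
        ≤ ∑ i ∈ Bᶜ.erase j, (expHit G A i - expHit G (insert j A) i) := by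
          apply Finset.sum_le_sum
          intro i hi
          have hiB : i ∉ B := by
            rw [Finset.mem_erase, Finset.mem_compl] at hi; exact hi.2
          have hiB' : i ∉ insert j B := hmemB i hi
          have hiA : i ∉ A := fun h => hiB (hAB h)
          have hiA' : i ∉ insert j A := hmemA i (hsubBA hi)
          rw [expHit, expHit, expHit, expHit,
            ← Summable.tsum_sub (hsummable hB hiB) (hsummable (Finset.insert_nonempty j B) hiB'),
            ← Summable.tsum_sub (hsummable hA hiA) (hsummable (Finset.insert_nonempty j A) hiA')]
          exact Summable.tsum_le_tsum (fun l => avoid_diff G hAB j l i)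
            ((hsummable hB hiB).sub (hsummable (Finset.insert_nonempty j B) hiB'))
            ((hsummable hA hiA).sub (hsummable (Finset.insert_nonempty j A) hiA'))
      _ ≤ ∑ i ∈ Aᶜ.erase j, (expHit G A i - expHit G (insert j A) i) := by
          apply Finset.sum_le_sum_of_subset_of_nonneg hsubBA
          intro i hi _
          rw [sub_nonneg]
          exact hmono hA (Finset.subset_insert j A) i (hmemA i hi)
  rw [hFB, hFB', hFA, hFA', add_sub_assoc, add_sub_assoc, ← Finset.sum_sub_distrib,
    ← Finset.sum_sub_distrib]
  exact add_le_add hj_le hsum_le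
end

section
/- Let V be a finite set and let F be a real-valued function on the nonempty subsets of V that is non-increasing (∅ ≠ A ⊆ B implies F(A) ≥ F(B)) and supermodular (for nonempty A ⊆ B and j ∈ V, F(A) − F(A ∪ {j}) ≥ F(B) − F(B ∪ {j})). Extend F to the empty set by F(∅) = max{ F(X) + F(Y) − F(X ∪ Y) : X, Y nonempty, X ∩ Y = ∅ }, and assume F_max ≠ F_min. Then F(∅) ≥ F_max, and the normalized rank function ρ(A) = ρ̄(A) − ρ̄(∅) satisfies: ρ(∅) = 0; ρ(A) ≥ 0 for all A ⊆ V; ρ is non-decreasing (A ⊆ B implies ρ(A) ≤ ρ(B)); and ρ is submodular (for A ⊆ B and j ∉ B, ρ(A ∪ {j}) − ρ(A) ≥ ρ(B ∪ {j}) − ρ(B)). -/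
/-!
Every value of `F` on a nonempty set is at most the value `F {a}` on a singleton, and two
distinct singletons `{a}`, `{b}` witness `F {a} ≤ F {a} + F {b} - F {a, b} ≤ F ∅`; hence the
extended `F` is non-increasing on all of `Finset V`. The splitting term for `B` and `{j}` is
exactly supermodularity with `A = ∅`. Finally `ρ A = (F ∅ - F A) / (F_max - F_min)` with a
nonnegative denominator, so the properties of `ρ` are those of `-F`.
-/

open Finset

section SetFunction

variable {α : Type*} {F : Finset α → ℝ}

theorem nontrivial_of_disjoint_nonempty [DecidableEq α] {X Y : Finset α} (hX : X.Nonempty)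
    (hY : Y.Nonempty) (hXY : Disjoint X Y) : Nontrivial α := by
  obtain ⟨x, hx⟩ := hX
  obtain ⟨y, hy⟩ := hY
  exact ⟨x, y, fun h => disjoint_left.mp hXY hx (h ▸ hy)⟩

theorem apply_le_apply_singleton (hmono : ∀ A B : Finset α, A.Nonempty → A ⊆ B → F B ≤ F A)
    {A : Finset α} {a : α} (ha : a ∈ A) : F A ≤ F {a} :=
  hmono {a} A (singleton_nonempty a) (singleton_subset_iff.mpr ha)

variable [DecidableEq α] (hsplit : ∀ X Y : Finset α, X.Nonempty → Y.Nonempty → Disjoint X Y →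
    F X + F Y - F (X ∪ Y) ≤ F ∅)
include hsplit

theorem apply_singleton_le_apply_empty
    (hmono : ∀ A B : Finset α, A.Nonempty → A ⊆ B → F B ≤ F A) {a b : α} (hab : a ≠ b) :
    F {a} ≤ F ∅ := by
  have hpair : F ({a} ∪ {b}) ≤ F {b} := hmono {b} _ (singleton_nonempty b) subset_union_right
  have hgain := hsplit {a} {b} (singleton_nonempty a) (singleton_nonempty b)
    (disjoint_singleton.mpr hab)
  linarith

theorem antitone_of_split_le [Nontrivial α]
    (hmono : ∀ A B : Finset α, A.Nonempty → A ⊆ B → F B ≤ F A) : Antitone F := by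
  intro A B hAB
  rcases A.eq_empty_or_nonempty with rfl | hA
  · rcases B.eq_empty_or_nonempty with rfl | ⟨b, hb⟩
    · exact le_rfl
    · obtain ⟨c, hcb⟩ := exists_ne b
      exact (apply_le_apply_singleton hmono hb).trans
        (apply_singleton_le_apply_empty hsplit hmono hcb.symm)
  · exact hmono A B hA hAB

theorem sub_apply_insert_le_of_subset
    (hsuper : ∀ A B : Finset α, A.Nonempty → A ⊆ B → ∀ j : α,
      F B - F (insert j B) ≤ F A - F (insert j A))
    {A B : Finset α} (hAB : A ⊆ B) {j : α} (hj : j ∉ B) :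
    F B - F (insert j B) ≤ F A - F (insert j A) := by
  rcases A.eq_empty_or_nonempty with rfl | hA
  · rcases B.eq_empty_or_nonempty with rfl | hB
    · exact le_rfl
    · have hgain := hsplit B {j} hB (singleton_nonempty j) (disjoint_singleton_right.mpr hj)
      rw [union_singleton] at hgain
      rw [insert_empty]
      linarith
  · exact hsuper A B hA hAB j

end SetFunction

theorem stmt6_general {V : Type*} [DecidableEq V]
    (F : Finset V → ℝ)
    (hmono : ∀ A B : Finset V, A.Nonempty → A ⊆ B → F B ≤ F A)
    (hsuper : ∀ A B : Finset V, A.Nonempty → A ⊆ B → ∀ j : V,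
      F B - F (insert j B) ≤ F A - F (insert j A))
    (hFempty : IsGreatest {x : ℝ | ∃ X Y : Finset V, X.Nonempty ∧ Y.Nonempty ∧
      Disjoint X Y ∧ x = F X + F Y - F (X ∪ Y)} (F ∅))
    (C : ℕ)
    (Fmax Fmin : ℝ)
    (hFmax : IsGreatest (Set.range fun a : V => F {a}) Fmax)
    (hFmin : IsLeast {x : ℝ | ∃ A : Finset V, A.Nonempty ∧ A.card ≤ C ∧ x = F A} Fmin)
    (ρbar ρ : Finset V → ℝ)
    (hρbar : ∀ A, ρbar A = (Fmax - F A) / (Fmax - Fmin))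
    (hρ : ∀ A, ρ A = ρbar A - ρbar ∅) :
    Fmax ≤ F ∅ ∧
      ρ ∅ = 0 ∧
      (∀ A : Finset V, 0 ≤ ρ A) ∧
      (∀ A B : Finset V, A ⊆ B → ρ A ≤ ρ B) ∧
      (∀ A B : Finset V, A ⊆ B → ∀ j ∉ B,
        ρ (insert j B) - ρ B ≤ ρ (insert j A) - ρ A) := by
  have hsplit : ∀ X Y : Finset V, X.Nonempty → Y.Nonempty → Disjoint X Y →
      F X + F Y - F (X ∪ Y) ≤ F ∅ := fun X Y hX hY hXY => hFempty.2 ⟨X, Y, hX, hY, hXY, rfl⟩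
  obtain ⟨X, Y, hX, hY, hXY, -⟩ := hFempty.1
  have := nontrivial_of_disjoint_nonempty hX hY hXY
  have hanti : Antitone F := antitone_of_split_le hsplit hmono
  have hd : 0 ≤ Fmax - Fmin := by
    obtain ⟨A, ⟨a, ha⟩, -, rfl⟩ := hFmin.1
    linarith [apply_le_apply_singleton hmono ha, hFmax.2 ⟨a, rfl⟩]
  have hρF : ∀ A, ρ A = (F ∅ - F A) / (Fmax - Fmin) := fun A => by
    rw [hρ, hρbar, hρbar]
    ring
  refine ⟨?_, by simp [hρF], fun A => ?_, fun A B hAB => ?_, fun A B hAB j hj => ?_⟩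
  · obtain ⟨a, rfl⟩ := hFmax.1
    exact hanti (empty_subset _)
  · rw [hρF]
    exact div_nonneg (sub_nonneg.mpr (hanti (empty_subset A))) hd
  · rw [hρF, hρF]
    exact div_le_div_of_nonneg_right (by linarith [hanti hAB]) hd
  · rw [hρF, hρF, hρF, hρF, div_sub_div_same, div_sub_div_same]
    exact div_le_div_of_nonneg_right
      (by linarith [sub_apply_insert_le_of_subset hsplit hsuper hAB hj]) hd

/-- Let `F` be non-increasing and supermodular on nonempty subsets of a finite
set `V`, extended to `∅` by `F(∅) = max { F(X) + F(Y) - F(X ∪ Y) : X, Y nonempty, X ∩ Y = ∅ }`,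
with `F_max = max_{a} F({a})`, `F_min = min { F(A) : ∅ ≠ A, |A| ≤ C }` and `F_max ≠ F_min`.
Then `F(∅) ≥ F_max`, and the normalized rank `ρ(A) = ρ̄(A) - ρ̄(∅)` (where
`ρ̄(A) = (F_max - F(A))/(F_max - F_min)`) satisfies `ρ(∅) = 0`, `ρ ≥ 0`, `ρ` is
non-decreasing, and `ρ` is submodular. -/
theorem stmt6 {V : Type*} [Fintype V] [DecidableEq V]
    (F : Finset V → ℝ)
    (hmono : ∀ A B : Finset V, A.Nonempty → A ⊆ B → F B ≤ F A)
    (hsuper : ∀ A B : Finset V, A.Nonempty → A ⊆ B → ∀ j : V,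
      F B - F (insert j B) ≤ F A - F (insert j A))
    (hFempty : IsGreatest {x : ℝ | ∃ X Y : Finset V, X.Nonempty ∧ Y.Nonempty ∧
      Disjoint X Y ∧ x = F X + F Y - F (X ∪ Y)} (F ∅))
    (C : ℕ) (hC0 : 0 < C) (hCN : C ≤ Fintype.card V)
    (Fmax Fmin : ℝ)
    (hFmax : IsGreatest (Set.range fun a : V => F {a}) Fmax)
    (hFmin : IsLeast {x : ℝ | ∃ A : Finset V, A.Nonempty ∧ A.card ≤ C ∧ x = F A} Fmin)
    (hne : Fmax ≠ Fmin)
    (ρbar ρ : Finset V → ℝ)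
    (hρbar : ∀ A, ρbar A = (Fmax - F A) / (Fmax - Fmin))
    (hρ : ∀ A, ρ A = ρbar A - ρbar ∅) :
    Fmax ≤ F ∅ ∧
      ρ ∅ = 0 ∧
      (∀ A : Finset V, 0 ≤ ρ A) ∧
      (∀ A B : Finset V, A ⊆ B → ρ A ≤ ρ B) ∧
      (∀ A B : Finset V, A ⊆ B → ∀ j ∉ B,
        ρ (insert j B) - ρ B ≤ ρ (insert j A) - ρ A) :=
  stmt6_general F hmono hsuper hFempty C Fmax Fmin hFmax hFmin ρbar ρ hρbar hρ
end

section
/- (Elemental-curvature increment bound) Let V be a finite set and ρ a nonnegative, non-decreasing, submodular set function on subsets of V with ρ(∅) = 0. Let κ ∈ [0,1] be such that for every A ⊆ V and all distinct i, j ∉ A, the increments satisfy ρ_i(A ∪ {j}) ≤ κ ρ_i(A), where ρ_i(A) = ρ(A ∪ {i}) − ρ(A). Then for every S ⊆ T ⊆ V and every enumeration j_1, …, j_r of T \ S, ρ(T) − ρ(S) ≤ Σ_{t=1}^{r} κ^{t−1} ρ_{j_t}(S). -/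
lemma curv_aux {V : Type*} [DecidableEq V] (ρ : Finset V → ℝ)
    (κ : ℝ) (hκ0 : 0 ≤ κ)
    (hcurv : ∀ A : Finset V, ∀ i j : V, i ∉ A → j ∉ A → i ≠ j →
      ρ (insert i (insert j A)) - ρ (insert j A) ≤ κ * (ρ (insert i A) - ρ A)) :
    ∀ (F A : Finset V) (i : V), i ∉ A → i ∉ F → (∀ j ∈ F, j ∉ A) →
      ρ (insert i (A ∪ F)) - ρ (A ∪ F) ≤ κ ^ F.card * (ρ (insert i A) - ρ A) := by
  intro F
  induction F using Finset.induction_on with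
  | empty => intro A i hiA _ _; simp
  | @insert j F hjF ih =>
    intro A i hiA hiF hFA
    have hiF' : i ∉ F := fun h => hiF (Finset.mem_insert_of_mem h)
    have hij : i ≠ j := fun h => hiF (h ▸ Finset.mem_insert_self j F)
    have hjA : j ∉ A := hFA j (Finset.mem_insert_self j F)
    have hiAF : i ∉ A ∪ F := by simp [hiA, hiF']
    have hjAF : j ∉ A ∪ F := by simp [hjA, hjF]
    have h1 := hcurv (A ∪ F) i j hiAF hjAF hij
    have h2 := ih A i hiA hiF' (fun k hk => hFA k (Finset.mem_insert_of_mem hk))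
    have : A ∪ insert j F = insert j (A ∪ F) := by
      ext x; simp [or_comm, or_assoc, or_left_comm]
    rw [this, Finset.card_insert_of_notMem hjF, pow_succ']
    calc ρ (insert i (insert j (A ∪ F))) - ρ (insert j (A ∪ F))
        ≤ κ * (ρ (insert i (A ∪ F)) - ρ (A ∪ F)) := h1
      _ ≤ κ * (κ ^ F.card * (ρ (insert i A) - ρ A)) := by
          exact mul_le_mul_of_nonneg_left h2 hκ0
      _ = κ * κ ^ F.card * (ρ (insert i A) - ρ A) := by ring

/-- Elemental-curvature increment bound: Let `ρ` be a nonnegative,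
non-decreasing, submodular set function on subsets of a finite set `V` with `ρ(∅) = 0`, and
let `κ ∈ [0,1]` satisfy the elemental curvature condition
`ρ_i(A ∪ {j}) ≤ κ ρ_i(A)` for all `A` and distinct `i, j ∉ A`, where
`ρ_i(A) = ρ(A ∪ {i}) - ρ(A)`. Then for every `S ⊆ T ⊆ V` and every enumeration
`j_1, …, j_r` of `T \ S`, `ρ(T) - ρ(S) ≤ Σ_{t=1}^{r} κ^{t-1} ρ_{j_t}(S)`. -/
theorem stmt11 {V : Type*} [Fintype V] [DecidableEq V]
    (ρ : Finset V → ℝ)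
    (hnonneg : ∀ A : Finset V, 0 ≤ ρ A) (hempty : ρ ∅ = 0)
    (hmono : ∀ A B : Finset V, A ⊆ B → ρ A ≤ ρ B)
    (hsub : ∀ A B : Finset V, A ⊆ B → ∀ j ∉ B,
      ρ (insert j B) - ρ B ≤ ρ (insert j A) - ρ A)
    (κ : ℝ) (hκ0 : 0 ≤ κ) (hκ1 : κ ≤ 1)
    (hcurv : ∀ A : Finset V, ∀ i j : V, i ∉ A → j ∉ A → i ≠ j →
      ρ (insert i (insert j A)) - ρ (insert j A) ≤ κ * (ρ (insert i A) - ρ A))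
    (S T : Finset V) (hST : S ⊆ T)
    (r : ℕ) (e : Fin r → V) (hinj : Function.Injective e)
    (himg : Finset.image e Finset.univ = T \ S) :
    ρ T - ρ S ≤ ∑ t : Fin r, κ ^ (t : ℕ) * (ρ (insert (e t) S) - ρ S) := by
  -- F t : first t elements of the enumeration
  set F : ℕ → Finset V := fun t => (Finset.univ.filter (fun k : Fin r => (k : ℕ) < t)).image e with hF
  have heTS : ∀ k : Fin r, e k ∈ T \ S := by
    intro k; rw [← himg]; exact Finset.mem_image_of_mem e (Finset.mem_univ k)
  have hFcard : ∀ t : Fin r, (F (t : ℕ)).card = (t : ℕ) := by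
    intro t
    rw [hF]
    rw [Finset.card_image_of_injective _ hinj]
    have : (Finset.univ.filter (fun k : Fin r => (k : ℕ) < (t : ℕ))).card
        = Fintype.card {k : Fin r // (k : ℕ) < (t : ℕ)} := (Fintype.card_subtype _).symm
    rw [this]
    rw [Fintype.card_eq_nat_card]
    have : {k : Fin r // (k : ℕ) < (t : ℕ)} ≃ Fin (t : ℕ) := by
      refine ⟨fun k => ⟨(k.1 : ℕ), k.2⟩, fun m => ⟨⟨m, lt_trans m.2 t.2⟩, m.2⟩, ?_, ?_⟩
      · intro k; ext; simp
      · intro m; ext; simp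
    rw [Nat.card_eq_of_equiv_fin (this.trans (Equiv.refl _))]
  have hF0 : F 0 = ∅ := by simp [hF]
  have hFr : F r = T \ S := by
    rw [hF, ← himg]; congr 1
    ext k; simp [Fin.is_lt]
  have hmemF : ∀ t : ℕ, ∀ x ∈ F t, x ∈ T \ S := by
    intro t x hx
    rw [hF] at hx
    simp only [Finset.mem_image, Finset.mem_filter] at hx
    obtain ⟨k, _, rfl⟩ := hx
    exact heTS k
  have hstep : ∀ t : Fin r, F ((t : ℕ) + 1) = insert (e t) (F (t : ℕ)) := by
    intro t
    simp only [hF]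
    have : (Finset.univ.filter (fun k : Fin r => (k : ℕ) < (t : ℕ) + 1))
        = insert t (Finset.univ.filter (fun k : Fin r => (k : ℕ) < (t : ℕ))) := by
      ext k
      simp only [Finset.mem_filter, Finset.mem_univ, true_and, Finset.mem_insert]
      constructor
      · intro h
        rcases Nat.lt_succ_iff_lt_or_eq.mp h with h | h
        · exact Or.inr h
        · exact Or.inl (Fin.ext h)
      · rintro (rfl | h)
        · exact Nat.lt_succ_self _
        · exact Nat.lt_succ_of_lt h
    rw [this, Finset.image_insert]
  have hetF : ∀ t : Fin r, e t ∉ F (t : ℕ) := by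
    intro t ht
    rw [hF] at ht
    simp only [Finset.mem_image, Finset.mem_filter, Finset.mem_univ, true_and] at ht
    obtain ⟨k, hk, hek⟩ := ht
    exact absurd (hinj hek ▸ hk) (lt_irrefl _)
  -- telescoping
  have htel : ρ T - ρ S = ∑ t ∈ Finset.range r, (ρ (S ∪ F (t + 1)) - ρ (S ∪ F t)) := by
    rw [Finset.sum_range_sub (fun t => ρ (S ∪ F t))]
    rw [hF0, hFr, Finset.union_sdiff_of_subset hST, Finset.union_empty]
  rw [htel, ← Fin.sum_univ_eq_sum_range (fun t => ρ (S ∪ F (t + 1)) - ρ (S ∪ F t)) r]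
  apply Finset.sum_le_sum
  intro t _
  rw [hstep t]
  have hdisj : ∀ j ∈ F (t : ℕ), j ∉ S := by
    intro j hj; exact (Finset.mem_sdiff.mp (hmemF _ j hj)).2
  have hetS : e t ∉ S := (Finset.mem_sdiff.mp (heTS t)).2
  have h := curv_aux ρ κ hκ0 hcurv (F (t : ℕ)) S (e t) hetS (hetF t) hdisj
  rw [hFcard t] at h
  have : S ∪ insert (e t) (F (t : ℕ)) = insert (e t) (S ∪ F (t : ℕ)) := by
    ext x; simp [or_comm, or_assoc, or_left_comm]
  rw [this]
  exact h
end

section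
/- (Rank lower bound from curvature and increments) Let V be a finite set, let ρ̄ be an un-normalized rank function and ρ(A) = ρ̄(A) − ρ̄(∅) the corresponding normalized rank, assumed non-decreasing and submodular with ρ(∅) = 0. Let κ ∈ [0,1] satisfy the elemental curvature bound ρ_i(A ∪ {j}) ≤ κ ρ_i(A) for all A and distinct i, j ∉ A. Let S ⊆ T ⊆ V with ρ̄(T) = 1, let j_1, …, j_r enumerate T \ S, and suppose γ ≥ ρ_{j_t}(S) for every t = 1, …, r. Then ρ̄(S) ≥ 1 − γ Σ_{t=1}^{r} κ^{t−1}. -/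
/-- Rank lower bound from curvature and increments: Let `ρ̄` be the
un-normalized rank `ρ̄(A) = (F_max - F(A))/(F_max - F_min)` and `ρ(A) = ρ̄(A) - ρ̄(∅)` the
normalized rank, assumed non-decreasing and submodular with `ρ(∅) = 0`, and let `κ ∈ [0,1]`
satisfy the elemental curvature bound. If `S ⊆ T ⊆ V` with `ρ̄(T) = 1`, `j_1, …, j_r`
enumerates `T \ S`, and `γ ≥ ρ_{j_t}(S)` for every `t`, then
`ρ̄(S) ≥ 1 - γ Σ_{t=1}^{r} κ^{t-1}`. -/
theorem stmt12 {V : Type*} [Fintype V] [DecidableEq V]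
    (F : Finset V → ℝ) (Fmax Fmin : ℝ) (hFm : Fmin < Fmax)
    (ρbar ρ : Finset V → ℝ)
    (hρbar : ∀ A, ρbar A = (Fmax - F A) / (Fmax - Fmin))
    (hρ : ∀ A, ρ A = ρbar A - ρbar ∅)
    (hempty : ρ ∅ = 0)
    (hmono : ∀ A B : Finset V, A ⊆ B → ρ A ≤ ρ B)
    (hsub : ∀ A B : Finset V, A ⊆ B → ∀ j ∉ B,
      ρ (insert j B) - ρ B ≤ ρ (insert j A) - ρ A)
    (κ : ℝ) (hκ0 : 0 ≤ κ) (hκ1 : κ ≤ 1)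
    (hcurv : ∀ A : Finset V, ∀ i j : V, i ∉ A → j ∉ A → i ≠ j →
      ρ (insert i (insert j A)) - ρ (insert j A) ≤ κ * (ρ (insert i A) - ρ A))
    (S T : Finset V) (hST : S ⊆ T) (hT : ρbar T = 1)
    (r : ℕ) (e : Fin r → V) (hinj : Function.Injective e)
    (himg : Finset.image e Finset.univ = T \ S)
    (γ : ℝ) (hγ : ∀ t : Fin r, ρ (insert (e t) S) - ρ S ≤ γ) :
    1 - γ * ∑ t ∈ Finset.range r, κ ^ t ≤ ρbar S := by
  classical
  set A : ℕ → Finset V :=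
    fun s => S ∪ ((Finset.univ : Finset (Fin r)).filter (fun i : Fin r => (i : ℕ) < s)).image e
    with hA
  have heS : ∀ i : Fin r, e i ∉ S := by
    intro i hi
    have h : e i ∈ T \ S := by
      rw [← himg]; exact Finset.mem_image_of_mem e (Finset.mem_univ i)
    exact (Finset.mem_sdiff.mp h).2 hi
  have hmemA : ∀ (i : Fin r) (s : ℕ), e i ∈ A s ↔ (i : ℕ) < s := by
    intro i s
    simp only [hA, Finset.mem_union, Finset.mem_image, Finset.mem_filter, Finset.mem_univ,
      true_and]
    constructor
    · rintro (h | ⟨j, hj, hje⟩)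
      · exact absurd h (heS i)
      · rwa [hinj hje] at hj
    · intro h; exact Or.inr ⟨i, h, rfl⟩
  have hA0 : A 0 = S := by
    simp [hA]
  have hAr : A r = T := by
    have hf : ((Finset.univ : Finset (Fin r)).filter (fun i : Fin r => (i : ℕ) < r)) = Finset.univ := by
      ext i; simp [i.isLt]
    simp only [hA, hf, himg]
    exact Finset.union_sdiff_of_subset hST
  have hstep : ∀ (s : ℕ) (h : s < r), A (s + 1) = insert (e ⟨s, h⟩) (A s) := by
    intro s h
    ext x
    simp only [hA, Finset.mem_insert, Finset.mem_union, Finset.mem_image, Finset.mem_filter,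
      Finset.mem_univ, true_and]
    constructor
    · rintro (hx | ⟨i, hi, rfl⟩)
      · exact Or.inr (Or.inl hx)
      · rcases Nat.lt_succ_iff_lt_or_eq.mp hi with hi' | hi'
        · exact Or.inr (Or.inr ⟨i, hi', rfl⟩)
        · exact Or.inl (congrArg e (Fin.ext hi'))
    · rintro (rfl | hx | ⟨i, hi, rfl⟩)
      · exact Or.inr ⟨⟨s, h⟩, Nat.lt_succ_self s, rfl⟩
      · exact Or.inl hx
      · exact Or.inr ⟨i, Nat.lt_succ_of_lt hi, rfl⟩
  have hnot : ∀ (i : Fin r) (s : ℕ), s ≤ (i : ℕ) → e i ∉ A s := by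
    intro i s hs h
    have := (hmemA i s).mp h
    omega
  -- key increment bound
  have hkey : ∀ t : Fin r, ρ (A ((t : ℕ) + 1)) - ρ (A (t : ℕ)) ≤ κ ^ (t : ℕ) * γ := by
    intro t
    have hind : ∀ s : ℕ, s ≤ (t : ℕ) →
        ρ (insert (e t) (A s)) - ρ (A s) ≤ κ ^ s * (ρ (insert (e t) S) - ρ S) := by
      intro s
      induction s with
      | zero => intro _; rw [hA0]; simp
      | succ n ih =>
        intro hn
        have hn' : n ≤ (t : ℕ) := Nat.le_of_succ_le hn
        have hnr : n < r := lt_of_lt_of_le (Nat.lt_of_succ_le hn) (Nat.le_of_lt t.isLt)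
        have hAn := hstep n hnr
        have hne : e t ≠ e ⟨n, hnr⟩ := by
          intro h
          have := hinj h
          have : (t : ℕ) = n := by rw [this]
          omega
        have hc := hcurv (A n) (e t) (e ⟨n, hnr⟩) (hnot t n hn')
          (hnot ⟨n, hnr⟩ n (le_refl n)) hne
        rw [← hAn] at hc
        calc ρ (insert (e t) (A (n + 1))) - ρ (A (n + 1))
            ≤ κ * (ρ (insert (e t) (A n)) - ρ (A n)) := hc
          _ ≤ κ * (κ ^ n * (ρ (insert (e t) S) - ρ S)) := by
              exact mul_le_mul_of_nonneg_left (ih hn') hκ0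
          _ = κ ^ (n + 1) * (ρ (insert (e t) S) - ρ S) := by ring
    have h1 : A ((t : ℕ) + 1) = insert (e t) (A (t : ℕ)) := by
      have := hstep (t : ℕ) t.isLt
      simpa using this
    rw [h1]
    calc ρ (insert (e t) (A (t : ℕ))) - ρ (A (t : ℕ))
        ≤ κ ^ (t : ℕ) * (ρ (insert (e t) S) - ρ S) := hind (t : ℕ) le_rfl
      _ ≤ κ ^ (t : ℕ) * γ :=
          mul_le_mul_of_nonneg_left (hγ t) (pow_nonneg hκ0 _)
  have htel : ∑ t ∈ Finset.range r, (ρ (A (t + 1)) - ρ (A t)) = ρ (A r) - ρ (A 0) :=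
    Finset.sum_range_sub (fun s => ρ (A s)) r
  have hsumle : ∑ t ∈ Finset.range r, (ρ (A (t + 1)) - ρ (A t)) ≤
      ∑ t ∈ Finset.range r, κ ^ t * γ := by
    refine Finset.sum_le_sum fun t ht => ?_
    exact hkey ⟨t, Finset.mem_range.mp ht⟩
  have hsum2 : ∑ t ∈ Finset.range r, κ ^ t * γ = γ * ∑ t ∈ Finset.range r, κ ^ t := by
    rw [Finset.mul_sum]; exact Finset.sum_congr rfl fun t _ => mul_comm _ _
  have hmain : ρ T - ρ S ≤ γ * ∑ t ∈ Finset.range r, κ ^ t := by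
    rw [← hAr, ← hA0]
    calc ρ (A r) - ρ (A 0) = _ := htel.symm
      _ ≤ ∑ t ∈ Finset.range r, κ ^ t * γ := hsumle
      _ = γ * ∑ t ∈ Finset.range r, κ ^ t := hsum2
  have hTρ := hρ T
  have hSρ := hρ S
  linarith
end

section
/- (Main guarantee) Let V be a finite set and ρ a nonnegative set function on subsets of V with ρ(∅) = 0. Fix K ≤ |V|, constants 0 < ν < 1 and η > 0, and let 𝒪*_K be a maximizer of ρ over { A ⊆ V : |A| ≤ K }. Assume: (1) there is a K-element set S ⊆ V with ρ(S) > η; (2) S_g is a K-element set with 0 < ρ(S_g) < min(ν, η) satisfying the greedy guarantee ρ(S_g) ≥ (1 − 1/e) ρ(𝒪*_K); and (3) the offered approximation S* satisfies ρ(S*) ≥ ρ(S). Define δ by 1 − δ = ρ(S_g)/η, so that 0 < δ < 1. Then ρ(S*) ≥ (1 + χ)(1 − 1/e) ρ(𝒪*_K) for some χ > δ/(1 − δ); equivalently, ρ(S*) > (1/(1 − δ)) (1 − 1/e) ρ(𝒪*_K). -/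
/-- Main guarantee: Let `ρ` be a nonnegative set function on subsets of a
finite set `V` with `ρ(∅) = 0`; fix `K ≤ |V|`, constants `0 < ν < 1` and `η > 0`, and a
maximizer `𝒪*_K` of `ρ` over sets of cardinality at most `K`. Assume (1) there is a
`K`-element set `S` with `ρ(S) > η`; (2) `S_g` is a `K`-element set with
`0 < ρ(S_g) < min(ν,η)` satisfying the greedy guarantee `ρ(S_g) ≥ (1 - 1/e) ρ(𝒪*_K)`;
(3) the offered approximation `S*` satisfies `ρ(S*) ≥ ρ(S)`. With `δ` defined by
`1 - δ = ρ(S_g)/η`, we have `0 < δ < 1`, `ρ(S*) ≥ (1+χ)(1-1/e) ρ(𝒪*_K)` for some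
`χ > δ/(1-δ)`, and equivalently `ρ(S*) > (1/(1-δ))(1-1/e) ρ(𝒪*_K)`. -/
theorem stmt13 {V : Type*} [Fintype V]
    (ρ : Finset V → ℝ) (hnonneg : ∀ A : Finset V, 0 ≤ ρ A) (hempty : ρ ∅ = 0)
    (K : ℕ) (hK : K ≤ Fintype.card V)
    (ν η : ℝ) (hν0 : 0 < ν) (hν1 : ν < 1) (hη : 0 < η)
    (O : Finset V) (hOcard : O.card ≤ K)
    (hOmax : ∀ A : Finset V, A.card ≤ K → ρ A ≤ ρ O)
    (S : Finset V) (hScard : S.card = K) (hS : η < ρ S)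
    (Sg : Finset V) (hSgcard : Sg.card = K)
    (hSgpos : 0 < ρ Sg) (hSglt : ρ Sg < min ν η)
    (hgreedy : (1 - (Real.exp 1)⁻¹) * ρ O ≤ ρ Sg)
    (Sstar : Finset V) (hSstar : ρ S ≤ ρ Sstar)
    (δ : ℝ) (hδ : 1 - δ = ρ Sg / η) :
    (0 < δ ∧ δ < 1) ∧
      (∃ χ : ℝ, δ / (1 - δ) < χ ∧ (1 + χ) * (1 - (Real.exp 1)⁻¹) * ρ O ≤ ρ Sstar) ∧
      (1 / (1 - δ)) * ((1 - (Real.exp 1)⁻¹) * ρ O) < ρ Sstar := by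
  have hlt : ρ Sg < η := lt_of_lt_of_le hSglt (min_le_right _ _)
  have h1δ : 0 < 1 - δ := by rw [hδ]; exact div_pos hSgpos hη
  have hδpos : 0 < δ := by
    have : ρ Sg / η < 1 := (div_lt_one hη).mpr hlt
    rw [← hδ] at this; linarith
  have hOpos : 0 < ρ O := lt_of_lt_of_le hSgpos (hOmax Sg (le_of_eq hSgcard))
  have he : (Real.exp 1)⁻¹ < 1 := by
    have h2 : (1:ℝ) + 1 ≤ Real.exp 1 := Real.add_one_le_exp 1
    rw [inv_lt_one_iff₀]; right; linarith
  have hcpos : 0 < (1 - (Real.exp 1)⁻¹) * ρ O := by nlinarith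
  set c := (1 - (Real.exp 1)⁻¹) * ρ O with hc
  have hSgη : ρ Sg = η * (1 - δ) := by rw [hδ]; field_simp
  have hkey : (1 / (1 - δ)) * c < ρ Sstar := by
    have h1 : (1 / (1 - δ)) * c ≤ η := by
      rw [div_mul_eq_mul_div, div_le_iff₀ h1δ, one_mul]
      nlinarith
    linarith
  refine ⟨⟨hδpos, by linarith⟩, ⟨ρ Sstar / c - 1, ?_, ?_⟩, hkey⟩
  · rw [div_mul_eq_mul_div, one_mul, div_lt_iff₀ h1δ] at hkey
    rw [lt_sub_iff_add_lt, div_add' _ _ _ (ne_of_gt h1δ), lt_div_iff₀ hcpos,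
      div_mul_eq_mul_div, div_lt_iff₀ h1δ]
    nlinarith
  · rw [add_sub_cancel, mul_assoc, ← hc, div_mul_cancel₀ _ (ne_of_gt hcpos)]
end
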